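/- arXiv:2509.17154 — 2 statements merged into one kernel-verified Lean document; each statement's English description precedes it below -/
import Mathlib

section
/- (Generalized representer theorem, minimizer form.) Let H be the RKHS of a kernel K: X × X → ℝ and let φ = (φ_1,…,φ_N) be a vector of bounded linear functionals on H. For ξ = (ξ_1,…,ξ_N) ∈ ℝ^N, consider f* := argmin{‖f‖_H : f ∈ H, φ_i(f) = ξ_i for i = 1,…,N}, and define the Gram matrix K(φ,φ) ∈ ℝ^{N×N} by K(φ,φ)_{ij} = φ_j(K_{φ_i}) where K_{φ_i} ∈ H is the Riesz representer of φ_i (i.e., ⟨f, K_{φ_i}⟩_H = φ_i(f) for all f ∈ H). If K(φ,φ) is invertible, then the minimizer exists, is unique, and has the form f* = K(φ,·)ᵀ K(φ,φ)^{−1} ξ, where K(φ,·) = (K_{φ_1},…,K_{φ_N}). -/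
open scoped RealInnerProductSpace
open Matrix

noncomputable section

/-- A symmetric positive-definite kernel. -/
def IsPosDefKernel {α : Type*} (K : α → α → ℝ) : Prop :=
  (∀ x y, K x y = K y x) ∧
    ∀ (n : ℕ) (x : Fin n → α) (c : Fin n → ℝ),
      0 ≤ ∑ i, ∑ j, c i * c j * K (x i) (x j)

/-- **Generalized representer theorem (minimizer form).**  Let `H` be the RKHS of a
kernel `K : X × X → ℝ` (realized via the evaluation map `ev`, kernel sections `sect` with
the reproducing property), and let `φ = (φ_1, …, φ_N)` be bounded linear functionals on
`H` with Riesz representers `rep i` and Gram matrix `G_{ij} = φ_j(K_{φ_i})`.  If `G` is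
invertible then the minimal-norm interpolation problem
`argmin {‖f‖_H : φ_i(f) = ξ_i}` has `f* = K(φ,·)ᵀ G⁻¹ ξ` as its unique minimizer:
`f*` is feasible, has minimal norm among feasible elements, and any feasible element of
the same norm equals `f*`. -/
theorem generalized_representer
    {X H : Type} [NormedAddCommGroup H] [InnerProductSpace ℝ H]
    (K : X → X → ℝ) (hK : IsPosDefKernel K)
    (ev : H →ₗ[ℝ] X → ℝ) (sect : X → H)
    (repro : ∀ (f : H) (x : X), ⟪f, sect x⟫ = ev f x)
    (sect_eval : ∀ x y : X, ev (sect x) y = K x y)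
    (N : ℕ) (φ : Fin N → H →L[ℝ] ℝ)
    (rep : Fin N → H) (hrep : ∀ (i : Fin N) (f : H), ⟪f, rep i⟫ = φ i f)
    (G : Matrix (Fin N) (Fin N) ℝ)
    (hG : G = Matrix.of fun i j => φ j (rep i))
    (hGinv : IsUnit G)
    (ξ : Fin N → ℝ) :
    ∀ fstar : H, fstar = ∑ i, (G⁻¹ *ᵥ ξ) i • rep i →
      (∀ i, φ i fstar = ξ i) ∧
      (∀ f : H, (∀ i, φ i f = ξ i) → ‖fstar‖ ≤ ‖f‖) ∧
      (∀ f : H, (∀ i, φ i f = ξ i) → ‖f‖ ≤ ‖fstar‖ → f = fstar) := by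
  intro fstar hfstar
  set c : Fin N → ℝ := G⁻¹ *ᵥ ξ with hc
  have hGsym : ∀ i j, G j i = G i j := by
    intro i j
    rw [hG]
    show φ i (rep j) = φ j (rep i)
    rw [← hrep, ← hrep, real_inner_comm]
  have hGG : G * G⁻¹ = 1 := Matrix.mul_nonsing_inv G ((Matrix.isUnit_iff_isUnit_det G).mp hGinv)
  have hphi : ∀ i, φ i fstar = ξ i := by
    intro i
    rw [← hrep i fstar, hfstar, sum_inner]
    have h2 : ∀ j, ⟪c j • rep j, rep i⟫ = G i j * c j := by
      intro j
      rw [real_inner_smul_left, hrep, ← hGsym, hG]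
      show c j * φ i (rep j) = φ i (rep j) * c j
      ring
    simp only [h2]
    have h3 : ∑ j, G i j * c j = (G *ᵥ c) i := rfl
    rw [h3, hc, Matrix.mulVec_mulVec, hGG]
    simp
  have horth : ∀ g : H, (∀ i, φ i g = 0) → ⟪g, fstar⟫ = 0 := by
    intro g hg
    rw [hfstar, inner_sum]
    apply Finset.sum_eq_zero
    intro j _
    rw [real_inner_smul_right, hrep, hg]
    ring
  have hpyth : ∀ f : H, (∀ i, φ i f = ξ i) → ‖f‖ ^ 2 = ‖fstar‖ ^ 2 + ‖f - fstar‖ ^ 2 := by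
    intro f hf
    have hg : ⟪f - fstar, fstar⟫ = 0 := by
      apply horth
      intro i
      rw [map_sub, hf, hphi, sub_self]
    have hfe : fstar + (f - fstar) = f := by abel
    have h := norm_add_sq_real fstar (f - fstar)
    rw [hfe, real_inner_comm, hg] at h
    linarith
  refine ⟨hphi, ?_, ?_⟩
  · intro f hf
    have h := hpyth f hf
    nlinarith [norm_nonneg f, norm_nonneg fstar, sq_nonneg ‖f - fstar‖]
  · intro f hf hle
    have h := hpyth f hf
    have h1 : ‖f - fstar‖ ^ 2 ≤ 0 := by nlinarith [norm_nonneg f, norm_nonneg fstar]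
    have h0 : ‖f - fstar‖ = 0 := by nlinarith [sq_nonneg ‖f - fstar‖, norm_nonneg (f - fstar)]
    exact sub_eq_zero.mp (norm_eq_zero.mp h0)
end
end

section
/- (Regularized representer norm identity.) Let H be the RKHS of a kernel K: X × X → ℝ, let φ = (φ_1,…,φ_N) be a vector of bounded linear functionals on H with Gram matrix K(φ,φ) ∈ ℝ^{N×N} given by K(φ,φ)_{ij} = φ_j(K_{φ_i}), and let ξ ∈ ℝ^N and λ > 0. Then the minimum over f ∈ H of the regularized functional ‖f‖²_H + (1/λ)‖φ(f) − ξ‖²₂, where φ(f) = (φ_1(f),…,φ_N(f)), equals ξᵀ (K(φ,φ) + λI)^{−1} ξ. -/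
open scoped RealInnerProductSpace
open Matrix

noncomputable section

/-!
With `G` the Gram matrix of the representers `v i` and `c = (G + λ I)⁻¹ ξ`, the candidate
minimiser is `f₀ = ∑ cᵢ vᵢ`. Since `⟪f₀, vⱼ⟫ = (G c)ⱼ = ξⱼ - λ cⱼ`, the first-order term of the
objective `J f = ‖f‖² + λ⁻¹ ∑ (⟪f, vᵢ⟫ - ξᵢ)²` at `f₀` vanishes, and completing the square gives
`J f = ξ ⬝ c + ‖f - f₀‖² + λ⁻¹ ∑ ⟪f - f₀, vᵢ⟫²` for every `f`.
-/

section RegularizedRisk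

variable {ι H : Type*} [Fintype ι] [NormedAddCommGroup H] [InnerProductSpace ℝ H]

def regularizedRisk (v : ι → H) (ξ : ι → ℝ) (lam : ℝ) (f : H) : ℝ :=
  ‖f‖ ^ 2 + (1 / lam) * ∑ i, (⟪f, v i⟫ - ξ i) ^ 2

theorem inner_sum_smul_eq_gram_mulVec (v : ι → H) (c : ι → ℝ) (j : ι) :
    ⟪∑ i, c i • v i, v j⟫ = (gram ℝ v *ᵥ c) j := by
  simp only [sum_inner, real_inner_smul_left, mulVec, dotProduct, gram_apply]
  exact Finset.sum_congr rfl fun i _ => by rw [real_inner_comm, mul_comm]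

theorem posDef_gram_add_smul_one [DecidableEq ι] (v : ι → H) {lam : ℝ} (hlam : 0 < lam) :
    (gram ℝ v + lam • (1 : Matrix ι ι ℝ)).PosDef :=
  PosDef.posSemidef_add (posSemidef_gram ℝ v) (PosDef.one.smul hlam)

theorem regularizedRisk_eq_of_mulVec_eq [DecidableEq ι] (v : ι → H) {ξ c : ι → ℝ} {lam : ℝ}
    (hlam : lam ≠ 0) (hc : (gram ℝ v + lam • (1 : Matrix ι ι ℝ)) *ᵥ c = ξ) (f : H) :
    regularizedRisk v ξ lam f = ξ ⬝ᵥ c + ‖f - ∑ i, c i • v i‖ ^ 2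
      + (1 / lam) * ∑ i, ⟪f - ∑ i, c i • v i, v i⟫ ^ 2 := by
  set f₀ := ∑ i, c i • v i
  have inner_f₀ (j : ι) : ⟪f₀, v j⟫ = ξ j - lam * c j := by
    rw [inner_sum_smul_eq_gram_mulVec, ← hc]
    simp [add_mulVec, smul_mulVec, one_mulVec]
  have inner_f₀_right (g : H) : ⟪g, f₀⟫ = ∑ i, c i * ⟪g, v i⟫ := by
    simp only [f₀, inner_sum, real_inner_smul_right]
  have norm_f₀ : ‖f₀‖ ^ 2 = ∑ i, c i * (ξ i - lam * c i) := by
    simp only [← real_inner_self_eq_norm_sq, inner_f₀_right, inner_f₀]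
  have square (i : ι) : (1 / lam) * (⟪f, v i⟫ - (ξ i - lam * c i)) ^ 2 =
      (1 / lam) * (⟪f, v i⟫ - ξ i) ^ 2 + 2 * (c i * ⟪f, v i⟫) - ξ i * c i
        - c i * (ξ i - lam * c i) := by
    field_simp; ring
  simp only [regularizedRisk, norm_sub_sq_real, inner_f₀_right, norm_f₀, inner_sub_left, inner_f₀,
    Finset.mul_sum, square, dotProduct, Finset.sum_add_distrib, Finset.sum_sub_distrib]
  ring

theorem isLeast_regularizedRisk [DecidableEq ι] (v : ι → H) (ξ : ι → ℝ) {lam : ℝ}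
    (hlam : 0 < lam) :
    IsLeast (Set.range (regularizedRisk v ξ lam))
      (ξ ⬝ᵥ ((gram ℝ v + lam • (1 : Matrix ι ι ℝ))⁻¹ *ᵥ ξ)) := by
  set A := gram ℝ v + lam • (1 : Matrix ι ι ℝ)
  set c := A⁻¹ *ᵥ ξ
  have hc : A *ᵥ c = ξ := by
    have hdet : IsUnit A.det := (isUnit_iff_isUnit_det A).1 (posDef_gram_add_smul_one v hlam).isUnit
    rw [mulVec_mulVec, mul_nonsing_inv A hdet, one_mulVec]
  have hJ := regularizedRisk_eq_of_mulVec_eq v hlam.ne' hc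
  refine ⟨⟨∑ i, c i • v i, by simp [hJ]⟩, ?_⟩
  rintro _ ⟨f, rfl⟩
  rw [hJ f]
  have hfit : 0 ≤ (1 / lam) * ∑ i, ⟪f - ∑ i, c i • v i, v i⟫ ^ 2 := by positivity
  have hdist : 0 ≤ ‖f - ∑ i, c i • v i‖ ^ 2 := by positivity
  linarith

end RegularizedRisk

theorem regularized_representer_norm_identity_general
    {H : Type} [NormedAddCommGroup H] [InnerProductSpace ℝ H]
    (N : ℕ) (φ : Fin N → H →L[ℝ] ℝ)
    (rep : Fin N → H) (hrep : ∀ (i : Fin N) (f : H), ⟪f, rep i⟫ = φ i f)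
    (G : Matrix (Fin N) (Fin N) ℝ)
    (hG : G = Matrix.of fun i j => φ j (rep i))
    (ξ : Fin N → ℝ) (lam : ℝ) (hlam : 0 < lam) :
    IsLeast (Set.range fun f : H => ‖f‖ ^ 2 + (1 / lam) * ∑ i, (φ i f - ξ i) ^ 2)
      (ξ ⬝ᵥ ((G + lam • (1 : Matrix (Fin N) (Fin N) ℝ))⁻¹ *ᵥ ξ)) := by
  have hG_gram : G = gram ℝ rep := by
    rw [hG]; ext i j; exact (hrep j (rep i)).symm
  have hφ : (fun f : H => ‖f‖ ^ 2 + (1 / lam) * ∑ i, (φ i f - ξ i) ^ 2) =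
      regularizedRisk rep ξ lam := by
    funext f; simp only [regularizedRisk, hrep]
  rw [hφ, hG_gram]
  exact isLeast_regularizedRisk rep ξ hlam

/-- **Regularized representer norm identity.**  Let `H` be the RKHS of a kernel
`K : X × X → ℝ`, let `φ = (φ_1, …, φ_N)` be bounded linear functionals on `H` with Riesz
representers `rep i` and Gram matrix `G_{ij} = φ_j(K_{φ_i})`, and let `ξ ∈ ℝ^N`,
`λ > 0`.  Then the minimum over `f ∈ H` of the regularized functional
`‖f‖²_H + (1/λ) ‖φ(f) − ξ‖²₂` is attained and equals `ξᵀ (G + λ I)⁻¹ ξ`. -/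
theorem regularized_representer_norm_identity
    {X H : Type} [NormedAddCommGroup H] [InnerProductSpace ℝ H]
    (K : X → X → ℝ) (hK : IsPosDefKernel K)
    (ev : H →ₗ[ℝ] X → ℝ) (sect : X → H)
    (repro : ∀ (f : H) (x : X), ⟪f, sect x⟫ = ev f x)
    (sect_eval : ∀ x y : X, ev (sect x) y = K x y)
    (N : ℕ) (φ : Fin N → H →L[ℝ] ℝ)
    (rep : Fin N → H) (hrep : ∀ (i : Fin N) (f : H), ⟪f, rep i⟫ = φ i f)
    (G : Matrix (Fin N) (Fin N) ℝ)
    (hG : G = Matrix.of fun i j => φ j (rep i))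
    (ξ : Fin N → ℝ) (lam : ℝ) (hlam : 0 < lam) :
    IsLeast (Set.range fun f : H => ‖f‖ ^ 2 + (1 / lam) * ∑ i, (φ i f - ξ i) ^ 2)
      (ξ ⬝ᵥ ((G + lam • (1 : Matrix (Fin N) (Fin N) ℝ))⁻¹ *ᵥ ξ)) :=
  regularized_representer_norm_identity_general N φ rep hrep G hG ξ lam hlam
end
end
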